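/- Let u be a nonnegative C^2 T-periodic solution of u'' + c u' + λ a(t) g(u) + α = 0, with a ≥ 0 on I = [σ,τ] ⊆ [0,T] and ∫_{σ₀}^{τ₀} a > 0 (σ₀ = σ+ε < τ-ε = τ₀), such that maxₜ∈I u(t) = ρ. Let η = min{g(s) : δρ ≤ s ≤ ρ} with δ = ε/(ε + e^{2|c|T}T). Then λ η ∫_{σ₀}^{τ₀} a(t) dt ≤ 2ρ e^{|c|T}/ε + 2|c|ρ. In particular, if λ > λ* := 2ρ(ε|c| + e^{|c|T})/(ε η ∫_{σ₀}^{τ₀} a), no such solution exists. -/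

import Mathlib

/-!
The weight `e^{ct}` turns the equation into `(e^{ct} u')' = -e^{ct} (λ a g(u) + α) ≤ 0` on `[σ, τ]`,
so `e^{ct} u'` is antitone there. Hence `u'` changes by at most a factor `e^{|c|T}` along the
interval, in the direction in which its sign propagates. Comparing `u'(t)` with the mean slope of
`u` towards an endpoint (where `u ≥ 0`) gives `ε |u'(t)| ≤ e^{|c|T} u(t)` on `[σ₀, τ₀]`, and
comparing with the mean slope towards a maximum point gives `ρ - u(t) ≤ T e^{|c|T} |u'(t)|`;
together `u ≥ δρ` on `[σ₀, τ₀]`, so `g(u) ≥ η` there. Integrating the equation over `[σ₀, τ₀]`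
leaves only boundary terms, which the gradient bound controls.
-/

open Real Set

theorem exp_mul_le_exp_abs_mul_of_abs_le {c x L : ℝ} (h : |x| ≤ L) :
    exp (c * x) ≤ exp (|c| * L) := by
  refine exp_le_exp.2 ((le_abs_self _).trans ?_)
  rw [abs_mul]
  exact mul_le_mul_of_nonneg_left h (abs_nonneg c)

theorem antitoneOn_exp_mul_of_deriv_add_mul_nonpos {f : ℝ → ℝ} {c : ℝ} {D : Set ℝ}
    (hD : Convex ℝ D) (hf : Differentiable ℝ f)
    (hle : ∀ x ∈ interior D, deriv f x + c * f x ≤ 0) :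
    AntitoneOn (fun x => exp (c * x) * f x) D := by
  have hderiv : ∀ x, HasDerivAt (fun x => exp (c * x) * f x)
      (exp (c * x) * (deriv f x + c * f x)) x := fun x => by
    refine (((hasDerivAt_id x).const_mul c).exp.mul (hf x).hasDerivAt).congr_deriv ?_
    simp only [id, mul_one]
    ring
  refine antitoneOn_of_deriv_nonpos hD (fun x _ => (hderiv x).continuousAt.continuousWithinAt)
    (fun x _ => (hderiv x).differentiableAt.differentiableWithinAt) fun x hx => ?_
  rw [(hderiv x).deriv]
  exact mul_nonpos_of_nonneg_of_nonpos (exp_pos _).le (hle x hx)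

section ExpWeightedAntitone

variable {f : ℝ → ℝ} {c L s t : ℝ} {D : Set ℝ}

theorem exp_mul_sub_mul_le_of_antitoneOn (hw : AntitoneOn (fun x => exp (c * x) * f x) D)
    (hs : s ∈ D) (ht : t ∈ D) (hst : s ≤ t) : exp (c * (t - s)) * f t ≤ f s := by
  have h : exp (c * t) * f t ≤ exp (c * s) * f s := hw hs ht hst
  rw [show c * t = c * s + c * (t - s) by ring, exp_add, mul_assoc] at h
  exact le_of_mul_le_mul_left h (exp_pos _)

theorem le_exp_mul_of_antitoneOn (hw : AntitoneOn (fun x => exp (c * x) * f x) D)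
    (hs : s ∈ D) (ht : t ∈ D) (hst : s ≤ t) (hL : t - s ≤ L) (h0 : 0 ≤ f t) :
    f t ≤ exp (|c| * L) * f s := by
  have h := exp_mul_sub_mul_le_of_antitoneOn hw hs ht hst
  have hfs : 0 ≤ f s := (mul_nonneg (exp_pos _).le h0).trans h
  calc f t = exp (-(c * (t - s))) * (exp (c * (t - s)) * f t) := by
        rw [← mul_assoc, ← exp_add, neg_add_cancel, exp_zero, one_mul]
    _ ≤ exp (c * (s - t)) * f s := by
        rw [show c * (s - t) = -(c * (t - s)) by ring]
        exact mul_le_mul_of_nonneg_left h (exp_pos _).le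
    _ ≤ exp (|c| * L) * f s := by
        refine mul_le_mul_of_nonneg_right (exp_mul_le_exp_abs_mul_of_abs_le ?_) hfs
        rw [abs_sub_comm, abs_of_nonneg (sub_nonneg.2 hst)]
        exact hL

theorem neg_le_exp_mul_neg_of_antitoneOn (hw : AntitoneOn (fun x => exp (c * x) * f x) D)
    (hs : s ∈ D) (ht : t ∈ D) (hst : s ≤ t) (hL : t - s ≤ L) (h0 : f s ≤ 0) :
    -f s ≤ exp (|c| * L) * -f t := by
  have h := exp_mul_sub_mul_le_of_antitoneOn hw hs ht hst
  have hft : 0 ≤ -f t :=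
    neg_nonneg.2 (nonpos_of_mul_nonpos_right (h.trans h0) (exp_pos _))
  calc -f s ≤ exp (c * (t - s)) * -f t := by linarith
    _ ≤ exp (|c| * L) * -f t := by
        refine mul_le_mul_of_nonneg_right (exp_mul_le_exp_abs_mul_of_abs_le ?_) hft
        rwa [abs_of_nonneg (sub_nonneg.2 hst)]

theorem le_exp_mul_abs_of_antitoneOn (hw : AntitoneOn (fun x => exp (c * x) * f x) D)
    (hs : s ∈ D) (ht : t ∈ D) (hst : s ≤ t) (hL : t - s ≤ L) :
    f t ≤ exp (|c| * L) * |f s| := by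
  rcases le_total 0 (f t) with h0 | h0
  · exact (le_exp_mul_of_antitoneOn hw hs ht hst hL h0).trans
      (mul_le_mul_of_nonneg_left (le_abs_self _) (exp_pos _).le)
  · exact h0.trans (by positivity)

theorem neg_le_exp_mul_abs_of_antitoneOn (hw : AntitoneOn (fun x => exp (c * x) * f x) D)
    (hs : s ∈ D) (ht : t ∈ D) (hst : s ≤ t) (hL : t - s ≤ L) :
    -f s ≤ exp (|c| * L) * |f t| := by
  rcases le_total (f s) 0 with h0 | h0
  · exact (neg_le_exp_mul_neg_of_antitoneOn hw hs ht hst hL h0).trans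
      (mul_le_mul_of_nonneg_left (neg_le_abs _) (exp_pos _).le)
  · exact (neg_nonpos.2 h0).trans (by positivity)

end ExpWeightedAntitone

section ExpWeightedAntitoneDeriv

variable {u : ℝ → ℝ} {c σ τ ε L s t : ℝ}

theorem mul_abs_deriv_le_of_antitoneOn (hu : Differentiable ℝ u)
    (hw : AntitoneOn (fun x => exp (c * x) * deriv u x) (Icc σ τ)) (hL : τ - σ ≤ L)
    (hε : 0 ≤ ε) (hσ : 0 ≤ u σ) (hτ : 0 ≤ u τ) (ht : t ∈ Icc (σ + ε) (τ - ε)) :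
    ε * |deriv u t| ≤ exp (|c| * L) * u t := by
  obtain ⟨hεt, htε⟩ := ht
  have hK := exp_pos (|c| * L)
  have hsub : ∀ {p q}, σ ≤ p → q ≤ τ → interior (Icc p q) ⊆ Icc σ τ := fun hp hq x hx =>
    ⟨hp.trans (interior_subset hx).1, (interior_subset hx).2.trans hq⟩
  rcases le_total 0 (deriv u t) with hpos | hneg
  · have hslope := (convex_Icc σ t).mul_sub_le_image_sub_of_le_deriv hu.continuous.continuousOn
      hu.differentiableOn (C := deriv u t / exp (|c| * L)) (fun x hx => by
        rw [div_le_iff₀' hK]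
        exact le_exp_mul_of_antitoneOn hw (hsub le_rfl (by linarith) hx) ⟨by linarith, by linarith⟩
          (interior_subset hx).2 (by linarith [(interior_subset hx).1]) hpos)
      σ (left_mem_Icc.2 (by linarith)) t (right_mem_Icc.2 (by linarith)) (by linarith)
    rw [abs_of_nonneg hpos]
    calc ε * deriv u t ≤ exp (|c| * L) * (deriv u t / exp (|c| * L) * (t - σ)) := by
          rw [← mul_assoc, mul_div_cancel₀ _ hK.ne']
          nlinarith
      _ ≤ exp (|c| * L) * u t := by gcongr; linarith
  · have hslope := (convex_Icc t τ).image_sub_le_mul_sub_of_deriv_le hu.continuous.continuousOn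
      hu.differentiableOn (C := -(-deriv u t / exp (|c| * L))) (fun x hx => by
        rw [le_neg, div_le_iff₀' hK]
        exact neg_le_exp_mul_neg_of_antitoneOn hw ⟨by linarith, by linarith⟩
          (hsub (by linarith) le_rfl hx) (interior_subset hx).1
          (by linarith [(interior_subset hx).2]) hneg)
      t (left_mem_Icc.2 (by linarith)) τ (right_mem_Icc.2 (by linarith)) (by linarith)
    rw [abs_of_nonpos hneg]
    calc ε * -deriv u t ≤ exp (|c| * L) * (-deriv u t / exp (|c| * L) * (τ - t)) := by
          rw [← mul_assoc, mul_div_cancel₀ _ hK.ne']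
          nlinarith
      _ ≤ exp (|c| * L) * u t := by gcongr; linarith

theorem sub_le_mul_abs_deriv_of_antitoneOn (hu : Differentiable ℝ u)
    (hw : AntitoneOn (fun x => exp (c * x) * deriv u x) (Icc σ τ)) (hL : τ - σ ≤ L)
    (hs : s ∈ Icc σ τ) (ht : t ∈ Icc σ τ) :
    u s - u t ≤ L * exp (|c| * L) * |deriv u t| := by
  have hM : 0 ≤ exp (|c| * L) * |deriv u t| := by positivity
  have hsub : ∀ {p q}, p ∈ Icc σ τ → q ∈ Icc σ τ → interior (Icc p q) ⊆ Icc σ τ :=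
    fun hp hq x hx => ⟨hp.1.trans (interior_subset hx).1, (interior_subset hx).2.trans hq.2⟩
  rcases le_total t s with hts | hst
  · have hslope := (convex_Icc t s).image_sub_le_mul_sub_of_deriv_le hu.continuous.continuousOn
      hu.differentiableOn (C := exp (|c| * L) * |deriv u t|) (fun x hx =>
        le_exp_mul_abs_of_antitoneOn hw ht (hsub ht hs hx) (interior_subset hx).1
          (by linarith [(interior_subset hx).2, hs.2, ht.1]))
      t (left_mem_Icc.2 hts) s (right_mem_Icc.2 hts) hts
    nlinarith [hs.2, ht.1]
  · have hslope := (convex_Icc s t).mul_sub_le_image_sub_of_le_deriv hu.continuous.continuousOn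
      hu.differentiableOn (C := -(exp (|c| * L) * |deriv u t|)) (fun x hx => neg_le.1 <|
        neg_le_exp_mul_abs_of_antitoneOn hw (hsub hs ht hx) ht (interior_subset hx).2
          (by linarith [(interior_subset hx).1, hs.1, ht.2]))
      s (left_mem_Icc.2 hst) t (right_mem_Icc.2 hst) hst
    nlinarith [hs.1, ht.2]

theorem div_mul_le_of_antitoneOn (hu : Differentiable ℝ u)
    (hw : AntitoneOn (fun x => exp (c * x) * deriv u x) (Icc σ τ)) (hL : τ - σ ≤ L)
    (hε : 0 < ε) (hσ : 0 ≤ u σ) (hτ : 0 ≤ u τ) (hs : s ∈ Icc σ τ)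
    (ht : t ∈ Icc (σ + ε) (τ - ε)) :
    ε / (ε + exp (2 * |c| * L) * L) * u s ≤ u t := by
  have htI : t ∈ Icc σ τ := ⟨by linarith [ht.1], by linarith [ht.2]⟩
  have hL0 : 0 ≤ L := by linarith [ht.1, ht.2]
  have hosc := sub_le_mul_abs_deriv_of_antitoneOn hu hw hL hs htI
  have hgrad := mul_abs_deriv_le_of_antitoneOn hu hw hL hε.le hσ hτ ht
  have hexp : exp (2 * |c| * L) = exp (|c| * L) * exp (|c| * L) := by
    rw [← exp_add]; ring_nf
  rw [div_mul_eq_mul_div, div_le_iff₀ (by positivity)]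
  calc ε * u s = ε * (u s - u t) + ε * u t := by ring
    _ ≤ L * exp (|c| * L) * (ε * |deriv u t|) + ε * u t := by nlinarith
    _ ≤ L * exp (|c| * L) * (exp (|c| * L) * u t) + ε * u t := by gcongr
    _ = u t * (ε + exp (2 * |c| * L) * L) := by rw [hexp]; ring

end ExpWeightedAntitoneDeriv

theorem integral_eq_of_deriv_deriv_add_mul_deriv_add_eq_zero {u h : ℝ → ℝ} {c : ℝ}
    (hu : ContDiff ℝ 2 u) (hh : Continuous h)
    (hode : ∀ t, deriv (deriv u) t + c * deriv u t + h t = 0) (p q : ℝ) :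
    ∫ t in p..q, h t = deriv u p - deriv u q + c * (u p - u q) := by
  have hu1 : Differentiable ℝ u := hu.differentiable (by norm_num)
  rw [intervalIntegral.integral_eq_sub_of_hasDerivAt (f := fun t => -(deriv u t + c * u t))
    (fun x _ => (((hu.differentiable_deriv_two x).hasDerivAt.add
      ((hu1 x).hasDerivAt.const_mul c)).neg).congr_deriv (by linarith [hode x]))
    (hh.intervalIntegrable p q)]
  ring

theorem mul_mul_integral_le_deriv_sub_deriv_add_mul_sub {u a G : ℝ → ℝ} {c lam α η p q : ℝ}
    (hu : ContDiff ℝ 2 u) (ha : Continuous a) (hG : Continuous G) (hlam : 0 ≤ lam) (hα : 0 ≤ α)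
    (hode : ∀ t, deriv (deriv u) t + c * deriv u t + lam * a t * G t + α = 0) (hpq : p ≤ q)
    (ha0 : ∀ t ∈ Icc p q, 0 ≤ a t) (hη : ∀ t ∈ Icc p q, η ≤ G t) :
    lam * η * ∫ t in p..q, a t ≤ deriv u p - deriv u q + c * (u p - u q) := by
  have hcont : Continuous fun t => lam * a t * G t + α :=
    ((continuous_const.mul ha).mul hG).add continuous_const
  calc lam * η * ∫ t in p..q, a t
      = ∫ t in p..q, lam * η * a t := (intervalIntegral.integral_const_mul _ _).symm
    _ ≤ ∫ t in p..q, lam * a t * G t + α :=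
        intervalIntegral.integral_mono_on hpq ((ha.intervalIntegrable _ _).const_mul _)
          (hcont.intervalIntegrable _ _) fun t ht => by
            nlinarith [mul_le_mul_of_nonneg_left (hη t ht) (mul_nonneg hlam (ha0 t ht))]
    _ = deriv u p - deriv u q + c * (u p - u q) :=
        integral_eq_of_deriv_deriv_add_mul_deriv_add_eq_zero hu hcont
          (fun t => by rw [← add_assoc]; exact hode t) p q

theorem mul_sub_le_abs_mul_of_mem_Icc {c x y ρ : ℝ} (hx : x ∈ Icc 0 ρ) (hy : y ∈ Icc 0 ρ) :
    c * (x - y) ≤ |c| * ρ := by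
  calc c * (x - y) ≤ |c * (x - y)| := le_abs_self _
    _ = |c| * |x - y| := abs_mul _ _
    _ ≤ |c| * ρ := mul_le_mul_of_nonneg_left
        (abs_sub_le_of_nonneg_of_le hx.1 hx.2 hy.1 hy.2) (abs_nonneg c)

theorem stmt5_general (T c lam α ε σ τ ρ η : ℝ) (hlam : 0 < lam) (hα : 0 ≤ α)
    (hε : 0 < ε) (hσ : 0 ≤ σ) (hτ : τ ≤ T) (hord : σ + ε < τ - ε)
    (a : ℝ → ℝ) (ha : Continuous a)
    (hapos : ∀ t ∈ Set.Icc σ τ, 0 ≤ a t)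
    (g : ℝ → ℝ) (hg : Continuous g) (hg0 : g 0 = 0) (hgpos : ∀ s > (0:ℝ), 0 < g s)
    (hη : IsLeast (g '' Set.Icc (ε / (ε + Real.exp (2 * |c| * T) * T) * ρ) ρ) η)
    (u : ℝ → ℝ) (hu : ContDiff ℝ 2 u) (hunn : ∀ t, 0 ≤ u t)
    (hode : ∀ t, deriv (deriv u) t + c * deriv u t + lam * a t * g (u t) + α = 0)
    (hmaxle : ∀ t ∈ Set.Icc σ τ, u t ≤ ρ) (hmaxeq : ∃ t₀ ∈ Set.Icc σ τ, u t₀ = ρ) :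
    lam * η * (∫ t in (σ + ε)..(τ - ε), a t)
      ≤ 2 * ρ * Real.exp (|c| * T) / ε + 2 * |c| * ρ := by
  obtain ⟨t₀, ht₀, hut₀⟩ := hmaxeq
  have hu1 : Differentiable ℝ u := hu.differentiable (by norm_num)
  have hgu : ∀ t, 0 ≤ g (u t) := fun t => (hunn t).eq_or_lt.elim
    (fun h => by rw [← h, hg0]) fun h => (hgpos _ h).le
  have hw : AntitoneOn (fun x => exp (c * x) * deriv u x) (Icc σ τ) :=
    antitoneOn_exp_mul_of_deriv_add_mul_nonpos (convex_Icc σ τ) hu.differentiable_deriv_two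
      fun t ht => by
        have := mul_nonneg (mul_nonneg hlam.le (hapos t (interior_subset ht))) (hgu t)
        linarith [hode t]
  have hL : τ - σ ≤ T := by linarith
  have hI : Icc (σ + ε) (τ - ε) ⊆ Icc σ τ := Icc_subset_Icc (by linarith) (by linarith)
  have hσ₀ : σ + ε ∈ Icc (σ + ε) (τ - ε) := left_mem_Icc.2 hord.le
  have hτ₀ : τ - ε ∈ Icc (σ + ε) (τ - ε) := right_mem_Icc.2 hord.le
  have hη_le : ∀ t ∈ Icc (σ + ε) (τ - ε), η ≤ g (u t) := fun t ht =>
    hη.2 ⟨u t, ⟨hut₀ ▸ div_mul_le_of_antitoneOn hu1 hw hL hε (hunn σ) (hunn τ) ht₀ ht,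
      hmaxle t (hI ht)⟩, rfl⟩
  have hderiv : ∀ t ∈ Icc (σ + ε) (τ - ε), |deriv u t| ≤ exp (|c| * T) * ρ / ε := fun t ht => by
    rw [le_div_iff₀' hε]
    exact (mul_abs_deriv_le_of_antitoneOn hu1 hw hL hε.le (hunn σ) (hunn τ) ht).trans
      (mul_le_mul_of_nonneg_left (hmaxle t (hI ht)) (exp_pos _).le)
  have hu_mem : ∀ t ∈ Icc (σ + ε) (τ - ε), u t ∈ Icc 0 ρ := fun t ht => ⟨hunn t, hmaxle t (hI ht)⟩
  have hρ₀ : 0 ≤ |c| * ρ := mul_nonneg (abs_nonneg c) (hut₀ ▸ hunn t₀)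
  have hint := mul_mul_integral_le_deriv_sub_deriv_add_mul_sub (G := fun t => g (u t)) hu ha
    (hg.comp hu1.continuous) hlam.le hα hode hord.le (fun t ht => hapos t (hI ht)) hη_le
  have hdrift := mul_sub_le_abs_mul_of_mem_Icc (c := c) (hu_mem _ hσ₀) (hu_mem _ hτ₀)
  have hleft := (le_abs_self _).trans (hderiv _ hσ₀)
  have hright := (neg_le_abs _).trans (hderiv _ hτ₀)
  rw [show 2 * ρ * exp (|c| * T) / ε = 2 * (exp (|c| * T) * ρ / ε) by ring]
  linarith

theorem stmt5 (T c lam α ε σ τ ρ η : ℝ) (hT : 0 < T) (hlam : 0 < lam) (hα : 0 ≤ α)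
    (hε : 0 < ε) (hσ : 0 ≤ σ) (hτ : τ ≤ T) (hord : σ + ε < τ - ε) (hρ : 0 < ρ)
    (a : ℝ → ℝ) (ha : Continuous a) (haP : Function.Periodic a T)
    (hapos : ∀ t ∈ Set.Icc σ τ, 0 ≤ a t)
    (haI : 0 < ∫ t in (σ + ε)..(τ - ε), a t)
    (g : ℝ → ℝ) (hg : Continuous g) (hg0 : g 0 = 0) (hgpos : ∀ s > (0:ℝ), 0 < g s)
    (hη : IsLeast (g '' Set.Icc (ε / (ε + Real.exp (2 * |c| * T) * T) * ρ) ρ) η)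
    (u : ℝ → ℝ) (hu : ContDiff ℝ 2 u) (huP : Function.Periodic u T) (hunn : ∀ t, 0 ≤ u t)
    (hode : ∀ t, deriv (deriv u) t + c * deriv u t + lam * a t * g (u t) + α = 0)
    (hmaxle : ∀ t ∈ Set.Icc σ τ, u t ≤ ρ) (hmaxeq : ∃ t₀ ∈ Set.Icc σ τ, u t₀ = ρ) :
    lam * η * (∫ t in (σ + ε)..(τ - ε), a t)
      ≤ 2 * ρ * Real.exp (|c| * T) / ε + 2 * |c| * ρ :=
  stmt5_general T c lam α ε σ τ ρ η hlam hα hε hσ hτ hord a ha hapos g hg hg0 hgpos hη u hu hunn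
    hode hmaxle hmaxeq
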